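/- arXiv:2502.18235 — 3 statements merged into one kernel-verified Lean document; each statement's English description precedes it below -/
import Mathlib

section
/- Let a > 0, b ≥ 0, f(u) = a·log(1+u) + b·log(1 + log(1+u)), and for each integer j ≥ 0 let ℓ_j = min{ d ∈ ℤ, d ≥ 0 : f(d) ≥ j }. Then ℓ_j · (j/a)^{b/a} · e^{−j/a} → 1 as j → ∞. -/
open Filter

section Aux
open Real

lemma aux_core (a b c : ℝ) (ha : 0 < a) (hb : 0 ≤ b) (hc : 0 < c) :
    Tendsto (fun t : ℝ => a * Real.log (1 + c * (Real.exp t / t ^ (b/a))) +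
      b * Real.log (1 + Real.log (1 + c * (Real.exp t / t ^ (b/a)))) - a * t)
      atTop (nhds (a * Real.log c)) := by
  set β := b / a with hβ
  have hab : a * β = b := by rw [hβ]; field_simp [ha.ne']
  set M : ℝ → ℝ := fun t => c * (Real.exp t / t ^ β) with hM_def
  have hM : Tendsto M atTop atTop := (tendsto_exp_div_rpow_atTop β).const_mul_atTop hc
  set r : ℝ → ℝ := fun t => Real.log (1 + (M t)⁻¹) with hr_def
  have hr : Tendsto r atTop (nhds 0) := by
    have h1 : Tendsto (fun t => (M t)⁻¹) atTop (nhds 0) := hM.inv_tendsto_atTop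
    have h2 : Tendsto (fun t => 1 + (M t)⁻¹) atTop (nhds 1) := by
      simpa using tendsto_const_nhds.add h1
    have := (Real.continuousAt_log one_ne_zero).tendsto.comp h2
    simpa [Function.comp_def, hr_def] using this
  set S : ℝ → ℝ := fun t => 1 + Real.log c + t - β * Real.log t + r t with hS_def
  have hSt : Tendsto (fun t => S t / t) atTop (nhds 1) := by
    have h1 : Tendsto (fun t : ℝ => (1 + Real.log c) * t⁻¹) atTop (nhds 0) := by
      simpa using tendsto_inv_atTop_zero.const_mul (1 + Real.log c)
    have h2 : Tendsto (fun t : ℝ => Real.log t / t) atTop (nhds 0) :=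
      Real.isLittleO_log_id_atTop.tendsto_div_nhds_zero
    have h3 : Tendsto (fun t : ℝ => r t / t) atTop (nhds 0) := hr.div_atTop tendsto_id
    have h4 : Tendsto (fun t : ℝ => (1 + Real.log c) * t⁻¹ + 1 - β * (Real.log t / t) + r t / t)
        atTop (nhds 1) := by
      have := ((h1.add (tendsto_const_nhds (x := (1:ℝ)))).sub (h2.const_mul β)).add h3
      simpa using this
    refine h4.congr' ?_
    filter_upwards [eventually_gt_atTop (0:ℝ)] with t ht
    have htne : t ≠ 0 := ne_of_gt ht
    simp only [hS_def]
    field_simp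
  have hSpos : ∀ᶠ t in atTop, 0 < S t := by
    filter_upwards [hSt.eventually (eventually_gt_nhds (by norm_num : (1:ℝ)/2 < 1)),
      eventually_gt_atTop (0:ℝ)] with t h1 h2
    calc (0:ℝ) < 1/2 * t := by linarith
    _ < S t := (lt_div_iff₀ h2).mp h1
  have hlim : Tendsto (fun t => a * Real.log c + a * r t + b * Real.log (S t / t))
      atTop (nhds (a * Real.log c)) := by
    have h2 : Tendsto (fun t => Real.log (S t / t)) atTop (nhds 0) := by
      have := (Real.continuousAt_log one_ne_zero).tendsto.comp hSt
      simpa [Function.comp_def] using this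
    have := (tendsto_const_nhds (x := a * Real.log c)).add ((hr.const_mul a).add (h2.const_mul b))
    simpa [add_assoc] using this
  refine hlim.congr' (EventuallyEq.symm ?_)
  filter_upwards [eventually_gt_atTop (0:ℝ), hSpos] with t ht hS
  have hMpos : 0 < M t := by
    have : 0 < t ^ β := Real.rpow_pos_of_pos ht β
    have := Real.exp_pos t
    simp only [hM_def]
    positivity
  have hlogM : Real.log (M t) = Real.log c + t - β * Real.log t := by
    simp only [hM_def]
    rw [Real.log_mul hc.ne' (by positivity),
      Real.log_div (Real.exp_ne_zero t) (ne_of_gt (Real.rpow_pos_of_pos ht β)),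
      Real.log_exp, Real.log_rpow ht]
    ring
  have hinvpos : (0:ℝ) < 1 + (M t)⁻¹ := by positivity
  have h1M : 1 + M t = M t * (1 + (M t)⁻¹) := by field_simp; ring
  have hlog1M : Real.log (1 + M t) = Real.log c + t - β * Real.log t + r t := by
    rw [h1M, Real.log_mul hMpos.ne' hinvpos.ne', hlogM]
  have hSeq : 1 + Real.log (1 + M t) = S t := by
    rw [hlog1M]; simp only [hS_def]; ring
  rw [Real.log_div (ne_of_gt hS) (ne_of_gt ht), hSeq, hlog1M]
  linear_combination (-(Real.log t)) * hab

end Aux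

theorem stmt_5 (a b : ℝ) (ha : 0 < a) (hb : 0 ≤ b)
    (f : ℝ → ℝ) (hf : ∀ u, f u = a * Real.log (1 + u) + b * Real.log (1 + Real.log (1 + u)))
    (ℓ : ℕ → ℕ) (hℓ : ∀ j : ℕ, ℓ j = sInf {d : ℕ | (j : ℝ) ≤ f d}) :
    Tendsto (fun j : ℕ => (ℓ j : ℝ) * ((j : ℝ) / a) ^ (b / a) * Real.exp (-(j : ℝ) / a))
      atTop (nhds 1) := by
  set L : ℕ → ℝ := fun j => Real.exp ((j:ℝ)/a) / ((j:ℝ)/a) ^ (b/a) with hL_def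
  have hdiv : Tendsto (fun j : ℕ => (j:ℝ)/a) atTop atTop :=
    tendsto_natCast_atTop_atTop.atTop_div_const ha
  have hL : Tendsto L atTop atTop := (tendsto_exp_div_rpow_atTop (b/a)).comp hdiv
  have hgc : ∀ c : ℝ, 0 < c →
      Tendsto (fun j : ℕ => f (c * L j) - j) atTop (nhds (a * Real.log c)) := by
    intro c hc
    have h := (aux_core a b c ha hb hc).comp hdiv
    refine h.congr fun j => ?_
    have haj : a * ((j:ℝ)/a) = (j:ℝ) := by field_simp
    simp only [Function.comp_apply, hL_def, hf, haj]
  have hmono : ∀ x y : ℝ, 0 ≤ x → x ≤ y → f x ≤ f y := by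
    intro x y hx hxy
    rw [hf, hf]
    have h1 : (0:ℝ) < 1 + x := by linarith
    have hlog : Real.log (1+x) ≤ Real.log (1+y) := Real.log_le_log h1 (by linarith)
    have h2 : (0:ℝ) < 1 + Real.log (1+x) := by
      have : (0:ℝ) ≤ Real.log (1+x) := Real.log_nonneg (by linarith)
      linarith
    have hlog2 : Real.log (1 + Real.log (1+x)) ≤ Real.log (1 + Real.log (1+y)) :=
      Real.log_le_log h2 (by linarith)
    have e1 := mul_le_mul_of_nonneg_left hlog ha.le
    have e2 := mul_le_mul_of_nonneg_left hlog2 hb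
    linarith
  have hne : ∀ j : ℕ, Set.Nonempty {d : ℕ | (j:ℝ) ≤ f d} := by
    intro j
    refine ⟨⌈Real.exp ((j:ℝ)/a)⌉₊, ?_⟩
    have hd : Real.exp ((j:ℝ)/a) ≤ ((⌈Real.exp ((j:ℝ)/a)⌉₊ : ℕ) : ℝ) := Nat.le_ceil _
    set d : ℝ := ((⌈Real.exp ((j:ℝ)/a)⌉₊ : ℕ) : ℝ) with hd_def
    have h1 : (j:ℝ)/a ≤ Real.log (1 + d) := by
      calc (j:ℝ)/a = Real.log (Real.exp ((j:ℝ)/a)) := (Real.log_exp _).symm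
      _ ≤ Real.log (1 + d) := Real.log_le_log (Real.exp_pos _) (by linarith)
    show (j:ℝ) ≤ f d
    rw [hf]
    have h2 : 0 ≤ Real.log (1 + d) := le_trans (by positivity) h1
    have h3 : 0 ≤ b * Real.log (1 + Real.log (1 + d)) :=
      mul_nonneg hb (Real.log_nonneg (by linarith))
    have h4 : (j:ℝ) ≤ a * Real.log (1+d) := by
      have h5 : a * ((j:ℝ)/a) ≤ a * Real.log (1+d) := mul_le_mul_of_nonneg_left h1 ha.le
      have h6 : a * ((j:ℝ)/a) = (j:ℝ) := by field_simp
      linarith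
    linarith
  have hmem : ∀ j : ℕ, (j:ℝ) ≤ f (ℓ j) := by
    intro j
    have h := Nat.sInf_mem (hne j)
    rw [← hℓ j] at h
    exact h
  rw [Metric.tendsto_atTop]
  intro ε hε
  set δ := min (ε/3) (1/2) with hδdef
  have hδ0 : 0 < δ := lt_min (by linarith) (by norm_num)
  have hδ1 : δ < 1 := lt_of_le_of_lt (min_le_right _ _) (by norm_num)
  have hδε : 2*δ < ε := by
    have := min_le_left (ε/3) (1/2)
    have h0 : δ ≤ ε/3 := this
    linarith
  have hEa : ∀ᶠ j : ℕ in atTop, 0 ≤ f ((1+δ) * L j) - j := by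
    have hpos : 0 < a * Real.log (1+δ) := mul_pos ha (Real.log_pos (by linarith))
    exact (hgc (1+δ) (by linarith)).eventually (eventually_ge_nhds hpos)
  have hEb : ∀ᶠ j : ℕ in atTop, f ((1-δ) * L j) - j < 0 := by
    have hneg : a * Real.log (1-δ) < 0 :=
      mul_neg_of_pos_of_neg ha (Real.log_neg (by linarith) (by linarith))
    exact (hgc (1-δ) (by linarith)).eventually (eventually_lt_nhds hneg)
  have hE3 : ∀ᶠ j : ℕ in atTop, 1/δ ≤ L j := hL.eventually (eventually_ge_atTop _)
  have hE4 : ∀ᶠ j : ℕ in atTop, 1 ≤ j := eventually_ge_atTop 1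
  have hall := (hEa.and (hEb.and (hE3.and hE4)))
  rw [eventually_atTop] at hall
  obtain ⟨N, hN⟩ := hall
  refine ⟨N, fun n hn => ?_⟩
  obtain ⟨h1, h2, h3, h4⟩ := hN n hn
  have hnpos : (0:ℝ) < (n:ℝ) := by exact_mod_cast Nat.lt_of_lt_of_le Nat.zero_lt_one h4
  have htpos : 0 < (n:ℝ)/a := div_pos hnpos ha
  have hLpos : 0 < L n := lt_of_lt_of_le (by positivity) h3
  have hup : (ℓ n : ℝ) ≤ (1+δ) * L n + 1 := by
    have hxnn : 0 ≤ (1+δ) * L n := by positivity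
    have hdle : (1+δ) * L n ≤ ((⌈(1+δ)*L n⌉₊ : ℕ) : ℝ) := Nat.le_ceil _
    have hfd : (n:ℝ) ≤ f (((⌈(1+δ)*L n⌉₊ : ℕ) : ℝ)) :=
      le_trans (by linarith) (hmono _ _ hxnn hdle)
    have hmem' : (⌈(1+δ)*L n⌉₊ : ℕ) ∈ {d : ℕ | (n:ℝ) ≤ f d} := hfd
    have hle := Nat.sInf_le hmem'
    rw [← hℓ n] at hle
    calc (ℓ n : ℝ) ≤ ((⌈(1+δ)*L n⌉₊ : ℕ) : ℝ) := by exact_mod_cast hle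
    _ ≤ (1+δ)*L n + 1 := le_of_lt (Nat.ceil_lt_add_one hxnn)
  have hlow : (1-δ) * L n < (ℓ n : ℝ) := by
    by_contra hcon
    push_neg at hcon
    have hfle : f (ℓ n) ≤ f ((1-δ)*L n) := hmono _ _ (Nat.cast_nonneg _) hcon
    have := hmem n
    linarith
  have hkey : ((n:ℝ)/a) ^ (b/a) * Real.exp (-(n:ℝ)/a) = (L n)⁻¹ := by
    simp only [hL_def]
    rw [neg_div, Real.exp_neg, inv_div]
    ring
  rw [Real.dist_eq, mul_assoc, hkey]
  have h5 : (ℓ n : ℝ) * (L n)⁻¹ ≤ ((1+δ)*L n + 1) * (L n)⁻¹ :=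
    mul_le_mul_of_nonneg_right hup (inv_nonneg.mpr hLpos.le)
  have h6 : ((1+δ)*L n + 1) * (L n)⁻¹ = (1+δ) + (L n)⁻¹ := by field_simp
  have h7 : (L n)⁻¹ ≤ δ := by
    rw [inv_le_comm₀ hLpos hδ0]
    simpa [one_div] using h3
  have h8 : (1-δ)*L n * (L n)⁻¹ < (ℓ n : ℝ) * (L n)⁻¹ :=
    mul_lt_mul_of_pos_right hlow (inv_pos.mpr hLpos)
  have h9 : (1-δ)*L n * (L n)⁻¹ = 1-δ := by field_simp
  rw [abs_sub_lt_iff]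
  constructor <;> nlinarith
end

section
/- Let a > 0, b ≥ 0, f(u) = a·log(1+u) + b·log(1 + log(1+u)), and ℓ_j = min{ d ∈ ℤ, d ≥ 0 : f(d) ≥ j }. Then (ℓ_{j+1} − ℓ_j) / ( (e^{1/a} − 1) · e^{j/a} / (j/a)^{b/a} ) → 1 as j → ∞. -/
open Filter

theorem stmt_6 (a b : ℝ) (ha : 0 < a) (hb : 0 ≤ b)
    (f : ℝ → ℝ) (hf : ∀ u, f u = a * Real.log (1 + u) + b * Real.log (1 + Real.log (1 + u)))
    (ℓ : ℕ → ℕ) (hℓ : ∀ j : ℕ, ℓ j = sInf {d : ℕ | (j : ℝ) ≤ f d}) :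
    Tendsto
      (fun j : ℕ =>
        ((ℓ (j + 1) : ℝ) - (ℓ j : ℝ)) /
          ((Real.exp (1 / a) - 1) * (Real.exp ((j : ℝ) / a) / ((j : ℝ) / a) ^ (b / a))))
      atTop (nhds 1) := by
  have ha' : a ≠ 0 := ne_of_gt ha
  -- g is the function in terms of log(1+u)
  set g : ℝ → ℝ := fun x => a * x + b * Real.log (1 + x) with hgdef
  have hgs : StrictMonoOn g (Set.Ici (0:ℝ)) := by
    intro x hx y hy hxy
    simp only [Set.mem_Ici] at hx hy
    have h1 : a * x < a * y := by nlinarith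
    have h2 : b * Real.log (1 + x) ≤ b * Real.log (1 + y) := by
      apply mul_le_mul_of_nonneg_left _ hb
      apply Real.log_le_log (by linarith)
      linarith
    simp only [hgdef]
    linarith
  -- existence of L j with g (L j) = j
  have hexist : ∀ j : ℕ, ∃ x : ℝ, 0 ≤ x ∧ g x = (j : ℝ) := by
    intro j
    have hja : (0:ℝ) ≤ (j:ℝ)/a := by positivity
    have hcont : ContinuousOn g (Set.Icc 0 ((j:ℝ)/a)) := by
      apply ContinuousOn.add
      · exact (continuous_const.mul continuous_id).continuousOn
      · apply ContinuousOn.mul continuousOn_const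
        apply ContinuousOn.log
        · exact (continuous_const.add continuous_id).continuousOn
        · intro x hx
          have := hx.1
          intro hc
          simp only [Set.mem_Icc] at hx
          nlinarith [hx.1]
    have h0 : g 0 = 0 := by simp [hgdef]
    have hge : (j:ℝ) ≤ g ((j:ℝ)/a) := by
      have hlog : 0 ≤ Real.log (1 + (j:ℝ)/a) := Real.log_nonneg (by linarith)
      have : a * ((j:ℝ)/a) = (j:ℝ) := by field_simp
      simp only [hgdef]
      nlinarith
    have hmem : (j:ℝ) ∈ Set.Icc (g 0) (g ((j:ℝ)/a)) := by
      rw [h0]; exact ⟨by positivity, hge⟩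
    obtain ⟨x, hx, hgx⟩ := intermediate_value_Icc hja hcont hmem
    exact ⟨x, hx.1, hgx⟩
  choose L hL0 hLeq using hexist
  have hgL : ∀ j : ℕ, a * L j + b * Real.log (1 + L j) = (j:ℝ) := hLeq
  -- positivity facts
  have hQpos : ∀ j : ℕ, (0:ℝ) < 1 + L j := fun j => by linarith [hL0 j]
  have hlogQ : ∀ j : ℕ, 0 ≤ Real.log (1 + L j) := fun j => Real.log_nonneg (by linarith [hL0 j])
  -- ℓ j = ⌈exp (L j) - 1⌉₊
  have hiff : ∀ j d : ℕ, ((j:ℝ) ≤ f d ↔ Real.exp (L j) - 1 ≤ (d:ℝ)) := by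
    intro j d
    have hd1 : (0:ℝ) < 1 + (d:ℝ) := by positivity
    have hlogd : (0:ℝ) ≤ Real.log (1 + (d:ℝ)) := Real.log_nonneg (by simp)
    have hfd : f d = g (Real.log (1 + (d:ℝ))) := by rw [hf]
    rw [hfd, ← hgL j]
    rw [hgs.le_iff_le (Set.mem_Ici.mpr (hL0 j)) (Set.mem_Ici.mpr hlogd)]
    rw [← Real.exp_le_exp, Real.exp_log hd1]
    constructor <;> intro h <;> linarith
  have hℓceil : ∀ j : ℕ, ℓ j = ⌈Real.exp (L j) - 1⌉₊ := by
    intro j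
    rw [hℓ]
    have hset : {d : ℕ | (j:ℝ) ≤ f d} = Set.Ici ⌈Real.exp (L j) - 1⌉₊ := by
      ext d
      simp only [Set.mem_setOf_eq, Set.mem_Ici, hiff j d, Nat.ceil_le]
    rw [hset, csInf_Ici]
  have hu0 : ∀ j : ℕ, (0:ℝ) ≤ Real.exp (L j) - 1 := by
    intro j
    have : Real.exp 0 ≤ Real.exp (L j) := Real.exp_le_exp.mpr (hL0 j)
    simpa using this
  have hlow : ∀ j : ℕ, Real.exp (L j) - 1 ≤ (ℓ j : ℝ) := by
    intro j; rw [hℓceil]; exact Nat.le_ceil _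
  have hhigh : ∀ j : ℕ, (ℓ j : ℝ) < Real.exp (L j) := by
    intro j; rw [hℓceil]
    have := Nat.ceil_lt_add_one (hu0 j)
    linarith
  -- L j bounds
  have hL_le : ∀ j : ℕ, L j ≤ (j:ℝ)/a := by
    intro j
    rw [le_div_iff₀ ha]
    nlinarith [hgL j, mul_nonneg hb (hlogQ j)]
  have hL_ge : ∀ j : ℕ, (j:ℝ)/(a+b) ≤ L j := by
    intro j
    rw [div_le_iff₀ (by linarith : (0:ℝ) < a + b)]
    have hlog : Real.log (1 + L j) ≤ L j := by
      have := Real.log_le_sub_one_of_pos (hQpos j)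
      linarith
    nlinarith [hgL j]
  -- log (1 + L j) / j → 0
  have hk : Tendsto (fun j : ℕ => 1 + (j:ℝ)/a) atTop atTop :=
    tendsto_atTop_add_const_left _ 1 ((tendsto_natCast_atTop_atTop).atTop_div_const ha)
  have hO : (fun j : ℕ => 1 + (j:ℝ)/a) =O[atTop] (fun j : ℕ => (j:ℝ)) := by
    rw [Asymptotics.isBigO_iff]
    refine ⟨1 + 1/a, ?_⟩
    filter_upwards [eventually_ge_atTop 1] with j hj
    have hj1 : (1:ℝ) ≤ (j:ℝ) := by exact_mod_cast hj
    rw [Real.norm_eq_abs, Real.norm_eq_abs, abs_of_nonneg (by positivity),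
      abs_of_nonneg (by positivity)]
    rw [add_mul, one_mul]
    have : (j:ℝ)/a = 1/a * (j:ℝ) := by ring
    linarith
  have hlog_lo : (fun j : ℕ => Real.log (1 + (j:ℝ)/a)) =o[atTop] (fun j : ℕ => (j:ℝ)) := by
    have := (Real.isLittleO_log_id_atTop.comp_tendsto hk).trans_isBigO hO
    exact this
  have hlogL_lo : (fun j : ℕ => Real.log (1 + L j)) =o[atTop] (fun j : ℕ => (j:ℝ)) := by
    refine (Asymptotics.isBigO_of_le atTop ?_).trans_isLittleO hlog_lo
    intro j
    rw [Real.norm_eq_abs, Real.norm_eq_abs, abs_of_nonneg (hlogQ j),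
      abs_of_nonneg (Real.log_nonneg (le_add_of_nonneg_right (by positivity)))]
    apply Real.log_le_log (hQpos j)
    linarith [hL_le j]
  have hT : Tendsto (fun j : ℕ => Real.log (1 + L j) / (j:ℝ)) atTop (nhds 0) :=
    hlogL_lo.tendsto_div_nhds_zero
  -- (1 + L j) * (a / j) → 1
  have h2 : Tendsto (fun j : ℕ => (1 + L j) * (a / (j:ℝ))) atTop (nhds 1) := by
    have haux : Tendsto (fun j : ℕ => a / (j:ℝ) + 1 - b * (Real.log (1 + L j) / (j:ℝ)))
        atTop (nhds 1) := by
      have h01 : Tendsto (fun j : ℕ => a / (j:ℝ)) atTop (nhds 0) :=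
        tendsto_const_div_atTop_nhds_zero_nat a
      have := (h01.add (tendsto_const_nhds : Tendsto (fun _ : ℕ => (1:ℝ)) atTop (nhds 1))).sub (hT.const_mul b)
      simpa using this
    refine Tendsto.congr' ?_ haux
    filter_upwards [eventually_ge_atTop 1] with j hj
    have hj0 : (j:ℝ) ≠ 0 := by
      have : (1:ℝ) ≤ (j:ℝ) := by exact_mod_cast hj
      linarith
    have e2 : a * L j = (j:ℝ) - b * Real.log (1 + L j) := by linarith [hgL j]
    field_simp
    nlinarith [hgL j]
  -- (j/a) / (1 + L j) → 1
  have hratio : Tendsto (fun j : ℕ => ((j:ℝ)/a) / (1 + L j)) atTop (nhds 1) := by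
    have := h2.inv₀ one_ne_zero
    rw [inv_one] at this
    refine Tendsto.congr' ?_ this
    filter_upwards [eventually_ge_atTop 1] with j hj
    have hj0 : (j:ℝ) ≠ 0 := by
      have : (1:ℝ) ≤ (j:ℝ) := by exact_mod_cast hj
      linarith
    have hQ := hQpos j
    field_simp
    try ring
    try exact Or.inl trivial
  -- rpow limit
  have h3 : Tendsto (fun j : ℕ => (((j:ℝ)/a) / (1 + L j)) ^ (b/a)) atTop (nhds 1) := by
    have := hratio.rpow_const (Or.inr (by positivity : (0:ℝ) ≤ b/a))
    simpa using this
  -- ratio of consecutive (1 + L j)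
  have h2shift : Tendsto (fun j : ℕ => (1 + L (j+1)) * (a / ((j:ℝ)+1))) atTop (nhds 1) := by
    have := h2.comp (tendsto_add_atTop_nat 1)
    refine Tendsto.congr' ?_ this
    filter_upwards with j
    simp [Function.comp]
  have hj1t : Tendsto (fun j : ℕ => ((j:ℝ)+1)/(j:ℝ)) atTop (nhds 1) := by
    have h01 : Tendsto (fun j : ℕ => (1:ℝ) / (j:ℝ)) atTop (nhds 0) :=
      tendsto_const_div_atTop_nhds_zero_nat 1
    have := (tendsto_const_nhds : Tendsto (fun _ : ℕ => (1:ℝ)) atTop (nhds 1)).add h01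
    refine Tendsto.congr' ?_ (by simpa using this)
    filter_upwards [eventually_ge_atTop 1] with j hj
    have hj0 : (j:ℝ) ≠ 0 := by
      have : (1:ℝ) ≤ (j:ℝ) := by exact_mod_cast hj
      linarith
    field_simp
    try ring
  have hquot : Tendsto (fun j : ℕ => (1 + L (j+1)) / (1 + L j)) atTop (nhds 1) := by
    have h := (h2shift.div h2 one_ne_zero).mul hj1t
    refine Tendsto.congr' ?_ (by simpa using h)
    filter_upwards [eventually_ge_atTop 1] with j hj
    have hj0 : (j:ℝ) ≠ 0 := by
      have : (1:ℝ) ≤ (j:ℝ) := by exact_mod_cast hj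
      linarith
    have hj10 : (j:ℝ) + 1 ≠ 0 := by positivity
    have hQ := hQpos j
    have hQ1 := hQpos (j+1)
    field_simp
  have hlogdiff : Tendsto (fun j : ℕ => Real.log ((1 + L (j+1)) / (1 + L j))) atTop (nhds 0) := by
    have := hquot.log one_ne_zero
    simpa using this
  have hΔ : Tendsto (fun j : ℕ => L (j+1) - L j) atTop (nhds (1/a)) := by
    have haux : Tendsto (fun j : ℕ => (1 - b * Real.log ((1 + L (j+1)) / (1 + L j))) / a)
        atTop (nhds (1/a)) := by
      have := ((tendsto_const_nhds : Tendsto (fun _ : ℕ => (1:ℝ)) atTop (nhds 1)).sub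
        (hlogdiff.const_mul b)).div_const a
      simpa using this
    refine Tendsto.congr ?_ haux
    intro j
    have hl : Real.log ((1 + L (j+1)) / (1 + L j)) =
        Real.log (1 + L (j+1)) - Real.log (1 + L j) :=
      Real.log_div (ne_of_gt (hQpos (j+1))) (ne_of_gt (hQpos j))
    have e1 := hgL (j+1)
    have e2 := hgL j
    push_cast at e1
    rw [hl]
    field_simp
    linarith
  -- exp(1/a) - 1 > 0
  have hE1 : (1:ℝ) < Real.exp (1/a) := by
    calc (1:ℝ) = Real.exp 0 := by simp
    _ < Real.exp (1/a) := Real.exp_lt_exp.mpr (by positivity)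
  have hEne : Real.exp (1/a) - 1 ≠ 0 := by linarith
  have h5 : Tendsto (fun j : ℕ => (Real.exp (L (j+1) - L j) - 1) / (Real.exp (1/a) - 1))
      atTop (nhds 1) := by
    have hexpΔ : Tendsto (fun j : ℕ => Real.exp (L (j+1) - L j)) atTop
        (nhds (Real.exp (1/a))) := (Real.continuous_exp.tendsto _).comp hΔ
    have := (hexpΔ.sub (tendsto_const_nhds : Tendsto (fun _ : ℕ => (1:ℝ)) atTop (nhds 1))).div_const
      (Real.exp (1/a) - 1)
    rw [div_self hEne] at this
    exact this
  -- denominator tends to atTop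
  have hD' : Tendsto (fun j : ℕ => Real.exp ((j:ℝ)/a) / ((j:ℝ)/a) ^ (b/a)) atTop atTop := by
    have := (tendsto_exp_div_rpow_atTop (b/a)).comp
      ((tendsto_natCast_atTop_atTop).atTop_div_const ha)
    exact this
  have hD : Tendsto (fun j : ℕ =>
      (Real.exp (1/a) - 1) * (Real.exp ((j:ℝ)/a) / ((j:ℝ)/a) ^ (b/a))) atTop atTop :=
    Tendsto.const_mul_atTop (by linarith) hD'
  -- error term → 0
  have herr : Tendsto (fun j : ℕ =>
      (((ℓ (j+1) : ℝ) - (ℓ j : ℝ)) - (Real.exp (L (j+1)) - Real.exp (L j))) /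
        ((Real.exp (1/a) - 1) * (Real.exp ((j:ℝ)/a) / ((j:ℝ)/a) ^ (b/a)))) atTop (nhds 0) := by
    apply squeeze_zero_norm'
      (a := fun j : ℕ => ((Real.exp (1/a) - 1) * (Real.exp ((j:ℝ)/a) / ((j:ℝ)/a) ^ (b/a)))⁻¹)
    · filter_upwards [hD.eventually_gt_atTop 0] with j hDj
      have hb1 : (Real.exp (L (j+1)) - 1 : ℝ) ≤ (ℓ (j+1) : ℝ) := hlow (j+1)
      have hb2 : ((ℓ (j+1) : ℝ)) < Real.exp (L (j+1)) := hhigh (j+1)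
      have hb3 : (Real.exp (L j) - 1 : ℝ) ≤ (ℓ j : ℝ) := hlow j
      have hb4 : ((ℓ j : ℝ)) < Real.exp (L j) := hhigh j
      have habs : |((ℓ (j+1) : ℝ) - (ℓ j : ℝ)) - (Real.exp (L (j+1)) - Real.exp (L j))| ≤ 1 :=
        abs_le.mpr ⟨by linarith, by linarith⟩
      rw [Real.norm_eq_abs, abs_div, abs_of_pos hDj, div_le_iff₀ hDj, inv_mul_cancel₀ (ne_of_gt hDj)]
      exact habs
    · exact hD.inv_tendsto_atTop
  -- main term → 1
  have hmain : Tendsto (fun j : ℕ =>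
      (Real.exp (L (j+1)) - Real.exp (L j)) /
        ((Real.exp (1/a) - 1) * (Real.exp ((j:ℝ)/a) / ((j:ℝ)/a) ^ (b/a)))) atTop (nhds 1) := by
    have h53 := h5.mul h3
    rw [mul_one] at h53
    refine Tendsto.congr' ?_ h53
    filter_upwards [eventually_ge_atTop 1] with j hj
    have hj1 : (1:ℝ) ≤ (j:ℝ) := by exact_mod_cast hj
    have hP : (0:ℝ) < (j:ℝ)/a := by positivity
    have hQ := hQpos j
    set c : ℝ := b/a with hc
    have hQc : (0:ℝ) < (1 + L j) ^ c := Real.rpow_pos_of_pos hQ c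
    have hPc : (0:ℝ) < ((j:ℝ)/a) ^ c := Real.rpow_pos_of_pos hP c
    have hexpLj : Real.exp (L j) * (1 + L j) ^ c = Real.exp ((j:ℝ)/a) := by
      rw [Real.rpow_def_of_pos hQ, ← Real.exp_add]
      congr 1
      have := hgL j
      field_simp [hc]
      have hca : c * a = b := by rw [hc]; exact div_mul_cancel₀ b ha'
      linear_combination this + Real.log (1 + L j) * hca
    rw [Real.div_rpow (le_of_lt hP) (le_of_lt hQ), Real.exp_sub, ← hexpLj]
    have hY : Real.exp (L j) ≠ 0 := (Real.exp_pos _).ne'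
    field_simp
    try ring
    try exact Or.inl trivial
  -- combine
  have hsum := hmain.add herr
  rw [add_zero] at hsum
  refine Tendsto.congr ?_ hsum
  intro j
  rw [← add_div]
  ring_nf
end

section
/- Let a > 0, b ≥ 0, f(u) = a·log(1+u) + b·log(1+log(1+u)), and define j(0) = 0, j(1) = 1, and j(i+1) = j(i) + ⌈ j(i)^{θ} ⌉ for i ≥ 1, where 0 ≤ θ ≤ 1. If θ < 1 then j(i+1)/j(i) → 1 as i → ∞, and if θ = 1 then j(i+1)/j(i) → 2; moreover, when 0 < θ < 1, ∑_{j = j(i)}^{j(i+1) − 1} j^{−θ} → 1 as i → ∞, and when θ = 1, ∑_{j = j(i)}^{j(i+1) − 1} j^{−1} → log 2. -/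
open Filter

section helpers

lemma log_succ_sub_le (k : ℕ) (hk : 1 ≤ k) :
    Real.log (k+1) - Real.log k ≤ (k:ℝ)⁻¹ := by
  have hk0 : (0:ℝ) < k := by exact_mod_cast hk
  have h1 : (0:ℝ) < ((k:ℝ)+1)/k := by positivity
  have := Real.log_le_sub_one_of_pos h1
  rw [Real.log_div (by positivity) (ne_of_gt hk0)] at this
  have : Real.log (↑k + 1) - Real.log ↑k ≤ (↑k + 1) / ↑k - 1 := this
  calc Real.log (↑k+1) - Real.log ↑k ≤ (↑k+1)/↑k - 1 := this
    _ = (k:ℝ)⁻¹ := by field_simp; ring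

lemma inv_succ_le_log (k : ℕ) (hk : 1 ≤ k) :
    ((k:ℝ)+1)⁻¹ ≤ Real.log (k+1) - Real.log k := by
  have hk0 : (0:ℝ) < k := by exact_mod_cast hk
  have h1 : (0:ℝ) < (k:ℝ)/((k:ℝ)+1) := by positivity
  have := Real.log_le_sub_one_of_pos h1
  rw [Real.log_div (ne_of_gt hk0) (by positivity)] at this
  have h2 : Real.log ↑k - Real.log (↑k+1) ≤ ↑k/(↑k+1) - 1 := this
  have h3 : (↑k:ℝ)/(↑k+1) - 1 = -((k:ℝ)+1)⁻¹ := by field_simp; ring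
  linarith [h2, h3.le, h3.ge]

lemma harm_bounds (n : ℕ) (hn : 1 ≤ n) :
    Real.log 2 ≤ ∑ k ∈ Finset.Ico n (2*n), (k:ℝ)⁻¹ ∧
    ∑ k ∈ Finset.Ico n (2*n), (k:ℝ)⁻¹ ≤ Real.log 2 + (n:ℝ)⁻¹ := by
  have hn0 : (0:ℝ) < n := by exact_mod_cast hn
  have hmn : n ≤ 2*n := by omega
  have htel : ∑ k ∈ Finset.Ico n (2*n), (Real.log (k+1) - Real.log k) = Real.log 2 := by
    have hbase : ∑ k ∈ Finset.Ico n (2*n),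
        (Real.log ((k+1:ℕ):ℝ) - Real.log ((k:ℕ):ℝ)) =
        Real.log (((2*n:ℕ):ℝ)) - Real.log ((n:ℕ):ℝ) := by
      rw [Finset.sum_Ico_eq_sub _ hmn, Finset.sum_range_sub (fun k => Real.log ((k:ℕ):ℝ)),
        Finset.sum_range_sub (fun k => Real.log ((k:ℕ):ℝ))]
      ring
    have he : ∑ k ∈ Finset.Ico n (2*n), (Real.log (k+1) - Real.log k) =
        Real.log (((2*n:ℕ):ℝ)) - Real.log ((n:ℕ):ℝ) := by
      rw [← hbase]; apply Finset.sum_congr rfl; intro k _; push_cast; ring_nf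
    rw [he]
    have h2n : ((2*n : ℕ) : ℝ) = 2 * n := by push_cast; ring
    rw [h2n, Real.log_mul two_ne_zero (ne_of_gt hn0)]
    ring
  have htel2 : ∑ k ∈ Finset.Ico n (2*n), ((k:ℝ)⁻¹ - ((k:ℝ)+1)⁻¹) ≤ (n:ℝ)⁻¹ := by
    have : ∑ k ∈ Finset.Ico n (2*n), (-(((k:ℕ)+1:ℕ):ℝ)⁻¹ - -((k:ℕ):ℝ)⁻¹) =
        -(((2*n:ℕ):ℝ))⁻¹ - -((n:ℕ):ℝ)⁻¹ := by
      rw [Finset.sum_Ico_eq_sub _ hmn, Finset.sum_range_sub (fun k => -((k:ℕ):ℝ)⁻¹),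
        Finset.sum_range_sub (fun k => -((k:ℕ):ℝ)⁻¹)]
      ring
    have he : ∑ k ∈ Finset.Ico n (2*n), ((k:ℝ)⁻¹ - ((k:ℝ)+1)⁻¹) =
        -(((2*n:ℕ):ℝ))⁻¹ - -((n:ℕ):ℝ)⁻¹ := by
      rw [← this]; apply Finset.sum_congr rfl; intro k _; push_cast; ring
    rw [he]
    have : (0:ℝ) ≤ (((2*n:ℕ):ℝ))⁻¹ := by positivity
    linarith
  constructor
  · rw [← htel]
    apply Finset.sum_le_sum
    intro k hk
    have hk1 : 1 ≤ k := le_trans hn (Finset.mem_Ico.mp hk).1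
    exact log_succ_sub_le k hk1
  · have hsum : ∑ k ∈ Finset.Ico n (2*n), (k:ℝ)⁻¹ ≤
        ∑ k ∈ Finset.Ico n (2*n), ((Real.log (k+1) - Real.log k) + ((k:ℝ)⁻¹ - ((k:ℝ)+1)⁻¹)) := by
      apply Finset.sum_le_sum
      intro k hk
      have hk1 : 1 ≤ k := le_trans hn (Finset.mem_Ico.mp hk).1
      have := inv_succ_le_log k hk1
      linarith
    rw [Finset.sum_add_distrib, htel] at hsum
    linarith

end helpers

theorem stmt_19 (θ : ℝ) (hθ0 : 0 ≤ θ) (hθ1 : θ ≤ 1)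
    (j : ℕ → ℕ) (h0 : j 0 = 0) (h1 : j 1 = 1)
    (hrec : ∀ i : ℕ, 1 ≤ i → j (i + 1) = j i + ⌈(j i : ℝ) ^ θ⌉₊) :
    (θ < 1 → Tendsto (fun i : ℕ => (j (i + 1) : ℝ) / (j i : ℝ)) atTop (nhds 1)) ∧
    (θ = 1 → Tendsto (fun i : ℕ => (j (i + 1) : ℝ) / (j i : ℝ)) atTop (nhds 2)) ∧
    (0 < θ → θ < 1 →
      Tendsto (fun i : ℕ => ∑ k ∈ Finset.Ico (j i) (j (i + 1)), (k : ℝ) ^ (-θ))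
        atTop (nhds 1)) ∧
    (θ = 1 →
      Tendsto (fun i : ℕ => ∑ k ∈ Finset.Ico (j i) (j (i + 1)), (k : ℝ)⁻¹)
        atTop (nhds (Real.log 2))) := by
  -- basic facts about j
  have hjge : ∀ i : ℕ, 1 ≤ i → i ≤ j i := by
    intro i hi
    induction i with
    | zero => omega
    | succ n ih =>
      rcases Nat.eq_or_lt_of_le hi with h | h
      · have hn0 : n = 0 := by omega
        subst hn0
        simp [h1]
      · have hn : 1 ≤ n := by omega
        have hjn : n ≤ j n := ih hn
        have hpos : (0:ℝ) < (j n : ℝ) ^ θ := by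
          apply Real.rpow_pos_of_pos
          have : (1:ℕ) ≤ j n := by omega
          exact_mod_cast Nat.lt_of_lt_of_le Nat.zero_lt_one this
        have hceil : 1 ≤ ⌈(j n : ℝ) ^ θ⌉₊ := Nat.one_le_ceil_iff.mpr hpos
        rw [hrec n hn]
        omega
  have hjpos : ∀ i : ℕ, 1 ≤ i → 1 ≤ j i := fun i hi => le_trans hi (hjge i hi)
  have htop : Tendsto (fun i : ℕ => (j i : ℝ)) atTop atTop := by
    apply tendsto_atTop_mono' _ _ tendsto_natCast_atTop_atTop
    filter_upwards [eventually_ge_atTop 1] with i hi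
    exact_mod_cast hjge i hi
  -- ratio tendsto 1 when θ < 1
  have hratio1 : θ < 1 → Tendsto (fun i : ℕ => (j (i + 1) : ℝ) / (j i : ℝ)) atTop (nhds 1) := by
    intro hlt
    have hub : Tendsto (fun i : ℕ => 1 + ((j i : ℝ) ^ (θ - 1) + (j i : ℝ)⁻¹)) atTop (nhds 1) := by
      have h1 : Tendsto (fun i : ℕ => (j i : ℝ) ^ (θ - 1)) atTop (nhds 0) := by
        have := tendsto_rpow_neg_atTop (y := 1 - θ) (by linarith)
        have := this.comp htop
        simpa [Function.comp_def, neg_sub] using this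
      have h2 : Tendsto (fun i : ℕ => (j i : ℝ)⁻¹) atTop (nhds 0) :=
        tendsto_inv_atTop_zero.comp htop
      have := (h1.add h2).const_add 1
      simpa using this
    apply tendsto_of_tendsto_of_tendsto_of_le_of_le' tendsto_const_nhds hub
    · filter_upwards [eventually_ge_atTop 1] with i hi
      have hp : (0:ℝ) < j i := by exact_mod_cast hjpos i hi
      have hle : j i ≤ j (i+1) := by rw [hrec i hi]; omega
      rw [le_div_iff₀ hp, one_mul]
      exact_mod_cast hle
    · filter_upwards [eventually_ge_atTop 1] with i hi
      have hp : (0:ℝ) < j i := by exact_mod_cast hjpos i hi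
      have hceil : (⌈(j i : ℝ) ^ θ⌉₊ : ℝ) < (j i : ℝ) ^ θ + 1 :=
        Nat.ceil_lt_add_one (Real.rpow_nonneg hp.le θ)
      have hcast : (j (i+1) : ℝ) = (j i : ℝ) + (⌈(j i : ℝ) ^ θ⌉₊ : ℝ) := by
        rw [hrec i hi]; push_cast; ring
      have hpow : (j i : ℝ) ^ θ / (j i : ℝ) = (j i : ℝ) ^ (θ - 1) := by
        rw [Real.rpow_sub hp, Real.rpow_one]
      rw [div_le_iff₀ hp, hcast]
      have hpow' : (j i : ℝ) ^ (θ - 1) * (j i : ℝ) = (j i : ℝ) ^ θ := by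
        rw [Real.rpow_sub hp, Real.rpow_one, div_mul_cancel₀ _ (ne_of_gt hp)]
      have expand : (1 + ((j i : ℝ) ^ (θ - 1) + (j i : ℝ)⁻¹)) * (j i : ℝ)
          = (j i : ℝ) + ((j i : ℝ) ^ θ + 1) := by
        calc (1 + ((j i:ℝ)^(θ-1) + (j i:ℝ)⁻¹)) * (j i:ℝ)
            = (j i:ℝ) + ((j i:ℝ)^(θ-1) * (j i:ℝ) + (j i:ℝ)⁻¹ * (j i:ℝ)) := by ring
          _ = (j i : ℝ) + ((j i : ℝ) ^ θ + 1) := by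
              rw [hpow', inv_mul_cancel₀ (ne_of_gt hp)]
      rw [expand]
      linarith
  -- j doubles when θ = 1
  have hdouble : θ = 1 → ∀ i : ℕ, 1 ≤ i → j (i + 1) = 2 * j i := by
    intro hθ i hi
    rw [hrec i hi, hθ, Real.rpow_one, Nat.ceil_natCast]
    omega
  refine ⟨hratio1, ?_, ?_, ?_⟩
  · -- ratio tendsto 2 when θ = 1
    intro hθ
    apply Tendsto.congr' _ (tendsto_const_nhds (x := (2:ℝ)))
    filter_upwards [eventually_ge_atTop 1] with i hi
    have hp : (0:ℝ) < j i := by exact_mod_cast hjpos i hi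
    rw [hdouble hθ i hi]
    push_cast
    field_simp
  · -- block sums tendsto 1 when 0 < θ < 1
    intro hθp hθlt
    have hL : Tendsto (fun i : ℕ => ((j i : ℝ) / (j (i+1) : ℝ)) ^ θ) atTop (nhds 1) := by
      have hr := hratio1 hθlt
      have hinv : Tendsto (fun i : ℕ => (j i : ℝ) / (j (i+1) : ℝ)) atTop (nhds 1) := by
        have := hr.inv₀ one_ne_zero
        simp only [inv_one] at this
        apply this.congr'
        filter_upwards [eventually_ge_atTop 1] with i hi
        rw [inv_div]
      have := hinv.rpow_const (Or.inr hθ0)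
      simpa using this
    have hU : Tendsto (fun i : ℕ => 1 + (j i : ℝ) ^ (-θ)) atTop (nhds 1) := by
      have h1 : Tendsto (fun i : ℕ => (j i : ℝ) ^ (-θ)) atTop (nhds 0) :=
        (tendsto_rpow_neg_atTop hθp).comp htop
      have := h1.const_add 1
      simpa using this
    apply tendsto_of_tendsto_of_tendsto_of_le_of_le' hL hU
    · -- lower bound
      filter_upwards [eventually_ge_atTop 1] with i hi
      have hp : (0:ℝ) < j i := by exact_mod_cast hjpos i hi
      have hle : j i ≤ j (i+1) := by rw [hrec i hi]; omega
      have hp1 : (0:ℝ) < j (i+1) := lt_of_lt_of_le hp (by exact_mod_cast hle)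
      have hcard : (Finset.Ico (j i) (j (i+1))).card = j (i+1) - j i := Nat.card_Ico _ _
      have hterm : ∀ k ∈ Finset.Ico (j i) (j (i+1)), (j (i+1) : ℝ) ^ (-θ) ≤ (k : ℝ) ^ (-θ) := by
        intro k hk
        have hk1 : j i ≤ k := (Finset.mem_Ico.mp hk).1
        have hk0 : (0:ℝ) < k := lt_of_lt_of_le hp (by exact_mod_cast hk1)
        have hkle : (k:ℝ) ≤ (j (i+1) : ℝ) :=
          by exact_mod_cast le_of_lt (Finset.mem_Ico.mp hk).2
        exact Real.rpow_le_rpow_of_nonpos hk0 hkle (neg_nonpos.mpr hθ0)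
      have hsum : ((j (i+1) - j i : ℕ) : ℝ) * (j (i+1) : ℝ) ^ (-θ) ≤
          ∑ k ∈ Finset.Ico (j i) (j (i+1)), (k : ℝ) ^ (-θ) := by
        have := Finset.card_nsmul_le_sum (Finset.Ico (j i) (j (i+1)))
          (fun k => (k : ℝ) ^ (-θ)) ((j (i+1) : ℝ) ^ (-θ)) hterm
        rw [hcard] at this
        simpa [nsmul_eq_mul] using this
      have hm : (j i : ℝ) ^ θ ≤ ((j (i+1) - j i : ℕ) : ℝ) := by
        have : (j (i+1) - j i : ℕ) = ⌈(j i : ℝ) ^ θ⌉₊ := by rw [hrec i hi]; omega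
        rw [this]
        exact Nat.le_ceil _
      have hkey : ((j i : ℝ) / (j (i+1) : ℝ)) ^ θ ≤
          ((j (i+1) - j i : ℕ) : ℝ) * (j (i+1) : ℝ) ^ (-θ) := by
        rw [Real.div_rpow hp.le hp1.le, Real.rpow_neg hp1.le, div_eq_mul_inv]
        exact mul_le_mul_of_nonneg_right hm (by positivity)
      exact le_trans hkey hsum
    · -- upper bound
      filter_upwards [eventually_ge_atTop 1] with i hi
      have hp : (0:ℝ) < j i := by exact_mod_cast hjpos i hi
      have hcard : (Finset.Ico (j i) (j (i+1))).card = j (i+1) - j i := Nat.card_Ico _ _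
      have hterm : ∀ k ∈ Finset.Ico (j i) (j (i+1)), (k : ℝ) ^ (-θ) ≤ (j i : ℝ) ^ (-θ) := by
        intro k hk
        have hk1 : j i ≤ k := (Finset.mem_Ico.mp hk).1
        exact Real.rpow_le_rpow_of_nonpos hp (by exact_mod_cast hk1) (neg_nonpos.mpr hθ0)
      have hsum : ∑ k ∈ Finset.Ico (j i) (j (i+1)), (k : ℝ) ^ (-θ) ≤
          ((j (i+1) - j i : ℕ) : ℝ) * (j i : ℝ) ^ (-θ) := by
        have := Finset.sum_le_card_nsmul (Finset.Ico (j i) (j (i+1)))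
          (fun k => (k : ℝ) ^ (-θ)) ((j i : ℝ) ^ (-θ)) hterm
        rw [hcard] at this
        simpa [nsmul_eq_mul] using this
      have hm : ((j (i+1) - j i : ℕ) : ℝ) ≤ (j i : ℝ) ^ θ + 1 := by
        have heq : (j (i+1) - j i : ℕ) = ⌈(j i : ℝ) ^ θ⌉₊ := by rw [hrec i hi]; omega
        rw [heq]
        exact le_of_lt (Nat.ceil_lt_add_one (Real.rpow_nonneg hp.le θ))
      have hone : (j i : ℝ) ^ θ * (j i : ℝ) ^ (-θ) = 1 := by
        rw [← Real.rpow_add hp]; simp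
      have hkey : ((j (i+1) - j i : ℕ) : ℝ) * (j i : ℝ) ^ (-θ) ≤ 1 + (j i : ℝ) ^ (-θ) := by
        calc ((j (i+1) - j i : ℕ) : ℝ) * (j i : ℝ) ^ (-θ)
            ≤ ((j i : ℝ) ^ θ + 1) * (j i : ℝ) ^ (-θ) :=
              mul_le_mul_of_nonneg_right hm (by positivity)
          _ = 1 + (j i : ℝ) ^ (-θ) := by rw [add_mul, hone, one_mul]
      exact le_trans hsum hkey
  · -- harmonic block sums tendsto log 2 when θ = 1
    intro hθ
    have hU : Tendsto (fun i : ℕ => Real.log 2 + (j i : ℝ)⁻¹) atTop (nhds (Real.log 2)) := by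
      have := (tendsto_inv_atTop_zero.comp htop).const_add (Real.log 2)
      simpa using this
    apply tendsto_of_tendsto_of_tendsto_of_le_of_le' tendsto_const_nhds hU
    · filter_upwards [eventually_ge_atTop 1] with i hi
      have h2 := hdouble hθ i hi
      have := (harm_bounds (j i) (hjpos i hi)).1
      rwa [← h2] at this
    · filter_upwards [eventually_ge_atTop 1] with i hi
      have h2 := hdouble hθ i hi
      have := (harm_bounds (j i) (hjpos i hi)).2
      rwa [← h2] at this
end
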